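/- arXiv:0710.0318 — 4 statements merged into one kernel-verified Lean document; each statement's English description precedes it below -/
import Mathlib

section
/- Fix a node u ∈ S, a subset V ⊆ C(u), a child v ∈ C(u) \ V, and a subset W ⊆ C(v). Then: (i) if V = ∅ and W = ∅, then D^u_{V,W}(v) = dist(u,v); (ii) if V = ∅ and W ≠ ∅, then D^u_{V,W}(v) = min_{y ∈ T(W)} (dist(u,y) + D^v_W(y)); (iii) if V ≠ ∅ and W = ∅, then D^u_{V,W}(v) = min_{x ∈ T(V)} (D^u_V(x) + dist(x,v)); (iv) if V ≠ ∅ and W ≠ ∅, then D^u_{V,W}(v) = min_{x ∈ T(V), y ∈ T(W)} (D^u_V(x) + dist(x,y) + D^v_W(y)). -/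
/-- A rooted tree on a vertex type `V`, given by a parent function under which
every vertex reaches the root. -/
structure ParentTree (V : Type) where
  root : V
  parent : V → V
  parent_root : parent root = root
  reaches_root : ∀ v, ∃ k, parent^[k] v = root

namespace ParentTree

variable {V : Type}

/-- The set `C(u)` of children of `u`. -/
def children (T : ParentTree V) (u : V) : Set V := {v | T.parent v = u ∧ v ≠ u}

/-- The set `T(u)` of descendants of `u` (including `u` itself). -/
def desc (T : ParentTree V) (u : V) : Set V := {b | ∃ k, T.parent^[k] b = u}

/-- For a set `U` of siblings, `T(U) = ⋃_{u ∈ U} T(u)`. -/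
def descU (T : ParentTree V) (U : Set V) : Set V := ⋃ u ∈ U, T.desc u

end ParentTree

/-- The set of points occurring in a list. -/
def listSet {V : Type} (l : List V) : Set V := {x | x ∈ l}

/-- The weight of a path (a list of points), i.e. the sum of distances over
consecutive pairs. -/
def pathWeight {V X : Type} [MetricSpace X] (f : V → X) (l : List V) : ℝ :=
  ((l.zip l.tail).map fun p => dist (f p.1) (f p.2)).sum

/-- The elements of `A` occur consecutively in the list `l`. -/
def ConsecutiveIn {V : Type} (A : Set V) (l : List V) : Prop :=
  ∃ m : List V, m <:+: l ∧ listSet m = A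

/-- A path conforms to the rooted tree `T` if for every node `w` with
`T(w)` contained in the vertex set of the path, the elements of `T(w)` occur
consecutively in the path. -/
def PathConforms {V : Type} (T : ParentTree V) (l : List V) : Prop :=
  ∀ w : V, T.desc w ⊆ listSet l → ConsecutiveIn (T.desc w) l

/-- `DD T f u Vs a` : the minimum weight `D^u_{Vs}(a)` of a conforming path of
pairwise distinct points that starts at `u`, has vertex set `{u} ∪ T(Vs)`, and
ends at `a`. -/
noncomputable def DD {V X : Type} [MetricSpace X] (T : ParentTree V) (f : V → X)
    (u : V) (Vs : Set V) (a : V) : ℝ :=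
  sInf {w | ∃ l : List V, l.Nodup ∧ l.head? = some u ∧ l.getLast? = some a ∧
    listSet l = {u} ∪ T.descU Vs ∧ PathConforms T l ∧ pathWeight f l = w}

/-- `DW T f u Vs v Ws` : the minimum weight `D^u_{Vs,Ws}(v)` of a conforming path of
pairwise distinct points that starts at `u`, ends at `v`, has vertex set
`{u} ∪ T(Vs) ∪ T(Ws) ∪ {v}`, and in which `{u} ∪ T(Vs)` occurs as a prefix. -/
noncomputable def DW {V X : Type} [MetricSpace X] (T : ParentTree V) (f : V → X)
    (u : V) (Vs : Set V) (v : V) (Ws : Set V) : ℝ :=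
  sInf {w | ∃ l : List V, l.Nodup ∧ l.head? = some u ∧ l.getLast? = some v ∧
    listSet l = {u} ∪ T.descU Vs ∪ T.descU Ws ∪ {v} ∧ PathConforms T l ∧
    (∃ l₁ l₂ : List V, l = l₁ ++ l₂ ∧ listSet l₁ = {u} ∪ T.descU Vs) ∧
    pathWeight f l = w}

/-!
After its prefix on `{u} ∪ T(V)`, a path defining `D^u_{V,W}(v)` is the reversal of a path
from `v` through `{v} ∪ T(W)`. Since `{u} ∪ T(V)` is disjoint from `T(v)`, every subtree `T(w)`
inside the vertex set lies in one of the two halves or, for `w = u`, contains both; so conformity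
both restricts to the halves and glues back. Hence the weights of these paths are exactly the sums
`w(l₁) + dist(x, y) + w(l₂)` of weights of paths defining `D^u_V(x)` and `D^v_W(y)`, and the
infimum of such sums is the sum of the infima. For `V = ∅` the first half is just `[u]`, ending at
`u` with weight `0`, and likewise for `W = ∅`.
-/

namespace ParentTree

variable {V : Type} (T : ParentTree V) {u v c w : V} {Vs : Set V}

lemma mem_desc_self (u : V) : u ∈ T.desc u := ⟨0, rfl⟩

lemma desc_subset_desc_of_mem (h : w ∈ T.desc u) : T.desc w ⊆ T.desc u := by
  rintro b ⟨j, hj⟩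
  obtain ⟨k, hk⟩ := h
  exact ⟨k + j, by rw [Function.iterate_add_apply, hj, hk]⟩

lemma mem_desc_of_parent_mem (h : T.parent w ∈ T.desc u) : w ∈ T.desc u := by
  obtain ⟨k, hk⟩ := h
  exact ⟨k + 1, hk⟩

lemma mem_descU {b : V} : b ∈ T.descU Vs ↔ ∃ c ∈ Vs, b ∈ T.desc c := by
  simp [descU]

@[simp]
lemma descU_empty : T.descU ∅ = ∅ := by
  simp [descU]

lemma desc_subset_descU (hc : c ∈ Vs) : T.desc c ⊆ T.descU Vs :=
  fun _ hb => T.mem_descU.2 ⟨c, hc, hb⟩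

lemma desc_subset_descU_of_mem (h : w ∈ T.descU Vs) : T.desc w ⊆ T.descU Vs := by
  obtain ⟨c, hc, hwc⟩ := T.mem_descU.1 h
  exact (T.desc_subset_desc_of_mem hwc).trans (T.desc_subset_descU hc)

lemma descU_nonempty (hVs : Vs ≠ ∅) : (T.descU Vs).Nonempty := by
  obtain ⟨c, hc⟩ := Set.nonempty_iff_ne_empty.2 hVs
  exact ⟨c, T.desc_subset_descU hc (T.mem_desc_self c)⟩

lemma eq_root_of_iterate_eq_self {s : ℕ} (hs : 0 < s) (h : T.parent^[s] u = u) :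
    u = T.root := by
  obtain ⟨k, hk⟩ := T.reaches_root u
  have hper : T.parent^[s * k] u = u := (Function.IsPeriodicPt.mul_const h k).eq
  rw [← hper, ← Nat.sub_add_cancel (Nat.le_mul_of_pos_left k hs), Function.iterate_add_apply,
    hk, Function.iterate_fixed T.parent_root]

lemma mem_desc_of_mem_children (hc : c ∈ T.children u) : c ∈ T.desc u := ⟨1, hc.1⟩

lemma notMem_desc_of_mem_children (hc : c ∈ T.children u) : u ∉ T.desc c := by
  rintro ⟨k, hk⟩
  have hroot : u = T.root :=
    T.eq_root_of_iterate_eq_self k.succ_pos (by rw [Function.iterate_succ_apply', hk, hc.1])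
  apply hc.2
  rw [← hk, hroot, Function.iterate_fixed T.parent_root]

lemma desc_ssubset_of_mem_children (hc : c ∈ T.children u) : T.desc c ⊂ T.desc u :=
  ⟨T.desc_subset_desc_of_mem (T.mem_desc_of_mem_children hc),
    fun h => T.notMem_desc_of_mem_children hc (h (T.mem_desc_self u))⟩

lemma mem_desc_or_mem_desc_of_mem_desc {a b x : V} (ha : x ∈ T.desc a) (hb : x ∈ T.desc b) :
    a ∈ T.desc b ∨ b ∈ T.desc a := by
  obtain ⟨j, hj⟩ := ha
  obtain ⟨k, hk⟩ := hb
  rcases le_total j k with h | h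
  · exact Or.inl ⟨k - j, by rw [← hj, ← Function.iterate_add_apply, Nat.sub_add_cancel h, hk]⟩
  · exact Or.inr ⟨j - k, by rw [← hk, ← Function.iterate_add_apply, Nat.sub_add_cancel h, hj]⟩

lemma eq_of_mem_desc_of_mem_children {c' : V} (hc : c ∈ T.children u)
    (hc' : c' ∈ T.children u) (h : c ∈ T.desc c') : c = c' := by
  obtain ⟨_ | s, hs⟩ := h
  · exact hs
  · refine absurd ⟨s, ?_⟩ (T.notMem_desc_of_mem_children hc')
    rwa [Function.iterate_succ_apply, hc.1] at hs

lemma pairwiseDisjoint_desc_children (u : V) : (T.children u).PairwiseDisjoint T.desc := by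
  intro c hc c' hc' hne
  refine Set.disjoint_left.2 fun x hxc hxc' => hne ?_
  rcases T.mem_desc_or_mem_desc_of_mem_desc hxc hxc' with h | h
  · exact T.eq_of_mem_desc_of_mem_children hc hc' h
  · exact (T.eq_of_mem_desc_of_mem_children hc' hc h).symm

lemma desc_eq_singleton_union_descU_children (u : V) :
    T.desc u = {u} ∪ T.descU (T.children u) := by
  refine Set.Subset.antisymm ?_ ?_
  · rintro b ⟨k, hk⟩
    induction k generalizing b with
    | zero => exact Or.inl hk
    | succ k ih =>
      rw [Function.iterate_succ_apply] at hk
      rcases ih hk with hb | hb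
      · by_cases hbu : b = u
        · exact Or.inl hbu
        · have hbc : b ∈ T.children u := ⟨hb, hbu⟩
          exact Or.inr (T.desc_subset_descU hbc (T.mem_desc_self b))
      · obtain ⟨c, hc, hbc⟩ := T.mem_descU.1 hb
        exact Or.inr (T.mem_descU.2 ⟨c, hc, T.mem_desc_of_parent_mem hbc⟩)
  · rintro b (rfl | hb)
    · exact T.mem_desc_self b
    · obtain ⟨c, hc, hbc⟩ := T.mem_descU.1 hb
      exact T.desc_subset_desc_of_mem (T.mem_desc_of_mem_children hc) hbc

lemma singleton_union_descU_subset_desc (hVs : Vs ⊆ T.children u) :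
    {u} ∪ T.descU Vs ⊆ T.desc u := by
  rw [T.desc_eq_singleton_union_descU_children u]
  exact Set.union_subset_union_right _ (Set.biUnion_subset_biUnion_left hVs)

lemma disjoint_singleton_union_descU_desc (hVs : Vs ⊆ T.children u) (hv : v ∈ T.children u)
    (hvVs : v ∉ Vs) : Disjoint ({u} ∪ T.descU Vs) (T.desc v) := by
  refine Set.disjoint_union_left.2 ⟨Set.disjoint_singleton_left.2
    (T.notMem_desc_of_mem_children hv), Set.disjoint_iUnion₂_left.2 fun c hc => ?_⟩
  exact T.pairwiseDisjoint_desc_children u (hVs hc) hv (ne_of_mem_of_not_mem hc hvVs)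

end ParentTree

lemma List.infix_left_of_infix_append {α : Type*} {m l₁ l₂ : List α} (h : m <:+: l₁ ++ l₂)
    (hm : ∀ a ∈ m, a ∉ l₂) (hl : ∀ a ∈ l₁, a ∉ l₂) : m <:+: l₁ := by
  classical
  have hm' : m.filter (· ∉ l₂) = m := List.filter_eq_self.2 (by simpa using hm)
  have hl' : (l₁ ++ l₂).filter (· ∉ l₂) = l₁ := by
    rw [List.filter_append, List.filter_eq_self.2 (by simpa using hl),
      List.filter_eq_nil_iff.2 (by simp), List.append_nil]
  simpa only [hm', hl'] using h.filter (· ∉ l₂)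

lemma List.infix_right_of_infix_append {α : Type*} {m l₁ l₂ : List α} (h : m <:+: l₁ ++ l₂)
    (hm : ∀ a ∈ m, a ∉ l₁) (hl : ∀ a ∈ l₂, a ∉ l₁) : m <:+: l₂ := by
  classical
  have hm' : m.filter (· ∉ l₁) = m := List.filter_eq_self.2 (by simpa using hm)
  have hl' : (l₁ ++ l₂).filter (· ∉ l₁) = l₂ := by
    rw [List.filter_append, List.filter_eq_nil_iff.2 (by simp),
      List.filter_eq_self.2 (by simpa using hl), List.nil_append]
  simpa only [hm', hl'] using h.filter (· ∉ l₁)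

lemma List.Nodup.eq_singleton_of_head?_of_getLast? {α : Type*} {l : List α} {a : α}
    (hl : l.Nodup) (hh : l.head? = some a) (ht : l.getLast? = some a) : l = [a] := by
  match l, hh with
  | [_], rfl => rfl
  | b :: c :: r, hh =>
    cases hh
    exact absurd (List.mem_of_getLast? (by simpa using ht)) (List.nodup_cons.1 hl).1

section Paths

variable {V X : Type} [MetricSpace X] (f : V → X)

@[simp]
lemma mem_listSet {x : V} {l : List V} : x ∈ listSet l ↔ x ∈ l := Iff.rfl

@[simp]
lemma listSet_append (l₁ l₂ : List V) : listSet (l₁ ++ l₂) = listSet l₁ ∪ listSet l₂ := by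
  ext; simp

@[simp]
lemma listSet_reverse (l : List V) : listSet l.reverse = listSet l := by
  ext; simp

@[simp]
lemma listSet_singleton (a : V) : listSet [a] = {a} := by
  ext; simp

@[simp]
lemma pathWeight_singleton (a : V) : pathWeight f [a] = 0 := by
  simp [pathWeight]

lemma pathWeight_cons_cons (a b : V) (l : List V) :
    pathWeight f (a :: b :: l) = dist (f a) (f b) + pathWeight f (b :: l) := by
  simp [pathWeight]

lemma pathWeight_nonneg (l : List V) : 0 ≤ pathWeight f l :=
  List.sum_nonneg fun _ hx => by
    obtain ⟨p, -, rfl⟩ := List.mem_map.1 hx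
    exact dist_nonneg

lemma pathWeight_append {l₁ l₂ : List V} {x y : V} (hx : l₁.getLast? = some x)
    (hy : l₂.head? = some y) :
    pathWeight f (l₁ ++ l₂) = pathWeight f l₁ + dist (f x) (f y) + pathWeight f l₂ := by
  obtain ⟨t, rfl⟩ : ∃ t, l₂ = y :: t := List.head?_eq_some_iff.1 hy
  induction l₁ with
  | nil => simp at hx
  | cons a l ih =>
    cases l with
    | nil =>
      obtain rfl : a = x := by simpa using hx
      simp [pathWeight_cons_cons]
    | cons b r =>
      rw [List.cons_append, List.cons_append, pathWeight_cons_cons, ← List.cons_append,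
        ih (by simpa using hx), pathWeight_cons_cons]
      ring

lemma pathWeight_reverse (l : List V) : pathWeight f l.reverse = pathWeight f l := by
  induction l with
  | nil => rfl
  | cons a l ih =>
    cases l with
    | nil => rfl
    | cons b r =>
      rw [List.reverse_cons, pathWeight_append f (x := b) (by simp) (rfl : [a].head? = some a), ih,
        pathWeight_cons_cons, pathWeight_singleton, dist_comm]
      ring

end Paths

section Conformity

variable {V : Type} {T : ParentTree V}

lemma ConsecutiveIn.mono {A : Set V} {l l' : List V} (h : ConsecutiveIn A l) (hl : l <:+: l') :
    ConsecutiveIn A l' := by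
  obtain ⟨m, hm, hA⟩ := h
  exact ⟨m, hm.trans hl, hA⟩

lemma ConsecutiveIn.reverse {A : Set V} {l : List V} (h : ConsecutiveIn A l) :
    ConsecutiveIn A l.reverse := by
  obtain ⟨m, hm, hA⟩ := h
  exact ⟨m.reverse, List.reverse_infix.2 hm, by rwa [listSet_reverse]⟩

lemma PathConforms.reverse {l : List V} (h : PathConforms T l) : PathConforms T l.reverse :=
  fun w hw => (h w (by rwa [listSet_reverse] at hw)).reverse

lemma PathConforms.append {l₁ l₂ : List V} (h₁ : PathConforms T l₁) (h₂ : PathConforms T l₂)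
    (hsplit : ∀ w, T.desc w ⊆ listSet (l₁ ++ l₂) →
      T.desc w ⊆ listSet l₁ ∨ T.desc w ⊆ listSet l₂ ∨ listSet (l₁ ++ l₂) ⊆ T.desc w) :
    PathConforms T (l₁ ++ l₂) := by
  intro w hw
  rcases hsplit w hw with h | h | h
  · exact (h₁ w h).mono (List.prefix_append _ _).isInfix
  · exact (h₂ w h).mono (List.suffix_append _ _).isInfix
  · exact ⟨_, List.infix_refl _, Set.Subset.antisymm h hw⟩

lemma PathConforms.of_append_left {l₁ l₂ : List V} (h : PathConforms T (l₁ ++ l₂))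
    (hd : ∀ a ∈ l₁, a ∉ l₂) : PathConforms T l₁ := by
  intro w hw
  obtain ⟨m, hm, hA⟩ := h w (hw.trans (by simp))
  refine ⟨m, List.infix_left_of_infix_append hm (fun a ha => hd a ?_) hd, hA⟩
  exact hw (hA ▸ ha : a ∈ T.desc w)

lemma PathConforms.of_append_right {l₁ l₂ : List V} (h : PathConforms T (l₁ ++ l₂))
    (hd : ∀ a ∈ l₁, a ∉ l₂) : PathConforms T l₂ := by
  intro w hw
  obtain ⟨m, hm, hA⟩ := h w (hw.trans (by simp))
  have hd' : ∀ a ∈ l₂, a ∉ l₁ := fun a ha ha' => hd a ha' ha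
  exact ⟨m, List.infix_right_of_infix_append hm
    (fun a ha => hd' a (hw (hA ▸ ha : a ∈ T.desc w))) hd', hA⟩

def IsConformingPath (T : ParentTree V) (S : Set V) (l : List V) : Prop :=
  l.Nodup ∧ listSet l = S ∧ PathConforms T l

lemma isConformingPath_singleton (a : V) : IsConformingPath T {a} [a] := by
  refine ⟨List.nodup_singleton a, listSet_singleton a, fun w hw => ?_⟩
  obtain rfl : w = a := by simpa using hw (T.mem_desc_self w)
  exact ⟨[w], List.infix_refl _, Set.Subset.antisymm (by simp [T.mem_desc_self]) hw⟩

lemma IsConformingPath.reverse {S : Set V} {l : List V} (h : IsConformingPath T S l) :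
    IsConformingPath T S l.reverse :=
  ⟨List.nodup_reverse.2 h.1, by rw [listSet_reverse, h.2.1], h.2.2.reverse⟩

lemma IsConformingPath.append {S₁ S₂ : Set V} {l₁ l₂ : List V}
    (h₁ : IsConformingPath T S₁ l₁) (h₂ : IsConformingPath T S₂ l₂) (hd : Disjoint S₁ S₂)
    (hsplit : ∀ w ∈ S₁ ∪ S₂, T.desc w ⊆ S₁ ∪ S₂ →
      T.desc w ⊆ S₁ ∨ T.desc w ⊆ S₂ ∨ S₁ ∪ S₂ ⊆ T.desc w) :
    IsConformingPath T (S₁ ∪ S₂) (l₁ ++ l₂) := by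
  obtain ⟨hnd₁, rfl, hc₁⟩ := h₁
  obtain ⟨hnd₂, rfl, hc₂⟩ := h₂
  refine ⟨List.nodup_append.2 ⟨hnd₁, hnd₂, fun a ha b hb hab => ?_⟩, listSet_append _ _,
    hc₁.append hc₂ fun w hw => ?_⟩
  · exact Set.disjoint_left.1 hd (mem_listSet.2 ha) (mem_listSet.2 (hab ▸ hb))
  · rw [listSet_append] at hw ⊢
    exact hsplit w (hw (T.mem_desc_self w)) hw

lemma IsConformingPath.append_of_desc_subset {S₁ S₂ : Set V} {l₁ l₂ : List V}
    (h₁ : IsConformingPath T S₁ l₁) (h₂ : IsConformingPath T S₂ l₂) (hd : Disjoint S₁ S₂)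
    (hS₁ : ∀ w ∈ S₁, T.desc w ⊆ S₁) (hS₂ : ∀ w ∈ S₂, T.desc w ⊆ S₂) :
    IsConformingPath T (S₁ ∪ S₂) (l₁ ++ l₂) :=
  h₁.append h₂ hd fun w hw _ => hw.imp (hS₁ w) fun h => Or.inl (hS₂ w h)

lemma IsConformingPath.of_append {S : Set V} {l₁ l₂ : List V}
    (h : IsConformingPath T S (l₁ ++ l₂)) :
    IsConformingPath T (listSet l₁) l₁ ∧ IsConformingPath T (listSet l₂) l₂ := by
  obtain ⟨hnd, -, hc⟩ := h
  obtain ⟨hnd₁, hnd₂, hd⟩ := List.nodup_append.1 hnd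
  have hd' : ∀ a ∈ l₁, a ∉ l₂ := fun a ha ha' => hd a ha a ha' rfl
  exact ⟨⟨hnd₁, rfl, hc.of_append_left hd'⟩, ⟨hnd₂, rfl, hc.of_append_right hd'⟩⟩

end Conformity

section Existence

variable {V : Type} {T : ParentTree V} {u x : V} {Vs : Set V}

lemma isConformingPath_nil : IsConformingPath T ∅ [] :=
  ⟨List.nodup_nil, by ext; simp, fun w hw => absurd (hw (T.mem_desc_self w)) (by simp)⟩

lemma ParentTree.descU_insert (c : V) (Vs : Set V) :
    T.descU (insert c Vs) = T.desc c ∪ T.descU Vs :=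
  Set.biUnion_insert c Vs T.desc

lemma exists_isConformingPath_descU [Finite V] (hVs : Vs.PairwiseDisjoint T.desc)
    (hblk : ∀ c ∈ Vs, ∃ l, IsConformingPath T (T.desc c) l) :
    ∃ l, IsConformingPath T (T.descU Vs) l := by
  refine Set.Finite.induction_on_subset (motive := fun s _ => ∃ l, IsConformingPath T (T.descU s) l)
    Vs Vs.toFinite ⟨[], by simpa using isConformingPath_nil⟩ ?_
  rintro c s hc hs hcs ⟨ls, hls⟩
  obtain ⟨lc, hlc⟩ := hblk c hc
  refine ⟨lc ++ ls, T.descU_insert c s ▸ hlc.append_of_desc_subset hls ?_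
    (fun w hw => T.desc_subset_desc_of_mem hw) fun w hw => T.desc_subset_descU_of_mem hw⟩
  exact Set.disjoint_iUnion₂_right.2 fun c' hc' =>
    hVs hc (hs hc') (ne_of_mem_of_not_mem hc' hcs).symm

def IsDDPath (T : ParentTree V) (u : V) (Vs : Set V) (a : V) (l : List V) : Prop :=
  IsConformingPath T ({u} ∪ T.descU Vs) l ∧ l.head? = some u ∧ l.getLast? = some a

/-- The possible last vertices of the paths defining `D^u_{Vs}`; for `Vs = ∅` the only such path
is `[u]`. -/
def ParentTree.pathEnds (T : ParentTree V) (u : V) (Vs : Set V) : Set V :=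
  if Vs = ∅ then {u} else T.descU Vs

lemma ParentTree.pathEnds_nonempty (T : ParentTree V) (u : V) (Vs : Set V) :
    (T.pathEnds u Vs).Nonempty := by
  unfold ParentTree.pathEnds
  split_ifs with hV
  · exact Set.singleton_nonempty u
  · exact T.descU_nonempty hV

lemma ParentTree.notMem_descU (hVs : Vs ⊆ T.children u) : u ∉ T.descU Vs := fun hu => by
  obtain ⟨c, hc, huc⟩ := T.mem_descU.1 hu
  exact T.notMem_desc_of_mem_children (hVs hc) huc

lemma isDDPath_singleton (u : V) : IsDDPath T u ∅ u [u] :=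
  ⟨by simpa using isConformingPath_singleton u, rfl, rfl⟩

lemma IsDDPath.mem_pathEnds {l : List V} (hVs : Vs ⊆ T.children u) (h : IsDDPath T u Vs x l) :
    x ∈ T.pathEnds u Vs := by
  obtain ⟨⟨hnd, hset, -⟩, hh, ht⟩ := h
  have hx : x ∈ {u} ∪ T.descU Vs := hset ▸ mem_listSet.2 (List.mem_of_getLast? ht)
  unfold ParentTree.pathEnds
  split_ifs with hV
  · simpa [hV] using hx
  · refine hx.resolve_left fun hxu => ?_
    obtain ⟨c, hc⟩ := Set.nonempty_iff_ne_empty.2 hV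
    have hl : l = [u] := hnd.eq_singleton_of_head?_of_getLast? hh (hxu ▸ ht)
    have hcl : c ∈ listSet l := hset ▸ Or.inr (T.desc_subset_descU hc (T.mem_desc_self c))
    rw [hl, listSet_singleton] at hcl
    exact (hVs hc).2 hcl

lemma exists_isDDPath_of_forall_mem_desc [Finite V] (hVs : Vs ⊆ T.children u)
    (hblk : ∀ c ∈ Vs, ∀ y ∈ T.desc c, ∃ l, IsConformingPath T (T.desc c) l ∧ l.getLast? = some y)
    (hx : x ∈ T.pathEnds u Vs) : ∃ l, IsDDPath T u Vs x l := by
  unfold ParentTree.pathEnds at hx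
  split_ifs at hx with hV
  · obtain rfl : x = u := hx
    exact hV ▸ ⟨[x], isDDPath_singleton x⟩
  obtain ⟨c₀, hc₀, hxc₀⟩ := T.mem_descU.1 hx
  obtain ⟨l₀, hl₀, hlast⟩ := hblk c₀ hc₀ x hxc₀
  obtain ⟨L, hL⟩ := exists_isConformingPath_descU (Vs := Vs \ {c₀})
    ((T.pairwiseDisjoint_desc_children u).subset (Set.sdiff_subset.trans hVs))
    fun c hc => (hblk c hc.1 c (T.mem_desc_self c)).imp fun _ h => h.1
  have hLl₀ : IsConformingPath T (T.descU Vs) (L ++ l₀) := by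
    have hd : Disjoint (T.descU (Vs \ {c₀})) (T.desc c₀) := Set.disjoint_iUnion₂_left.2
      fun c hc => T.pairwiseDisjoint_desc_children u (hVs hc.1) (hVs hc₀) hc.2
    have h := hL.append_of_desc_subset hl₀ hd (fun w hw => T.desc_subset_descU_of_mem hw)
      fun w hw => T.desc_subset_desc_of_mem hw
    rwa [Set.union_comm, ← T.descU_insert, Set.insert_sdiff_singleton,
      Set.insert_eq_of_mem hc₀] at h
  refine ⟨[u] ++ (L ++ l₀), (isConformingPath_singleton u).append hLl₀
    (Set.disjoint_singleton_left.2 (T.notMem_descU hVs)) ?_, rfl,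
    by simp only [List.getLast?_append, hlast, Option.some_or]⟩
  rintro w (rfl | hw) -
  · exact Or.inr (Or.inr (T.singleton_union_descU_subset_desc hVs))
  · exact Or.inr (Or.inl (T.desc_subset_descU_of_mem hw))

lemma exists_isConformingPath_desc_getLast [Finite V] (c : V) (hx : x ∈ T.desc c) :
    ∃ l, IsConformingPath T (T.desc c) l ∧ l.getLast? = some x := by
  induction hn : (T.desc c).ncard using Nat.strong_induction_on generalizing c x with
  | _ n ih =>
  have hblk : ∀ c' ∈ T.children c, ∀ y ∈ T.desc c',
      ∃ l, IsConformingPath T (T.desc c') l ∧ l.getLast? = some y := fun c' hc' _ hy =>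
    ih _ (hn ▸ Set.ncard_lt_ncard (T.desc_ssubset_of_mem_children hc')) c' hy rfl
  rw [T.desc_eq_singleton_union_descU_children c] at hx ⊢
  by_cases hxc : x = c
  · -- a path ending at `c` is the reverse of one starting at `c`
    obtain ⟨y, hy⟩ := T.pathEnds_nonempty c (T.children c)
    obtain ⟨l, ⟨hl, hh, -⟩⟩ := exists_isDDPath_of_forall_mem_desc subset_rfl hblk hy
    exact ⟨l.reverse, hl.reverse, by rw [List.getLast?_reverse, hh, hxc]⟩
  · have hx' : x ∈ T.descU (T.children c) := hx.resolve_left hxc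
    have hxe : x ∈ T.pathEnds c (T.children c) := by
      rwa [ParentTree.pathEnds, if_neg fun h => by simp [h] at hx']
    obtain ⟨l, ⟨hl, -, ht⟩⟩ := exists_isDDPath_of_forall_mem_desc subset_rfl hblk hxe
    exact ⟨l, hl, ht⟩

lemma exists_isDDPath [Finite V] (hVs : Vs ⊆ T.children u) (hx : x ∈ T.pathEnds u Vs) :
    ∃ l, IsDDPath T u Vs x l :=
  exists_isDDPath_of_forall_mem_desc hVs
    (fun c _ _ hy => exists_isConformingPath_desc_getLast c hy) hx

end Existence

open scoped Pointwise in
lemma sInf_le_sInf_add_add {S A B : Set ℝ} (d : ℝ) (hS : BddBelow S) (hA : A.Nonempty)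
    (hA' : BddBelow A) (hB : B.Nonempty) (hB' : BddBelow B)
    (h : ∀ a ∈ A, ∀ b ∈ B, a + d + b ∈ S) : sInf S ≤ sInf A + d + sInf B := by
  have key : sInf S - d ≤ sInf (A + B) := le_csInf (hA.add hB) <| by
    rintro _ ⟨a, ha, b, hb, rfl⟩
    linarith [csInf_le hS (h a ha b hb)]
  rw [csInf_add hA hA' hB hB'] at key
  linarith

section Values

variable {V X : Type} [MetricSpace X] {T : ParentTree V} {f : V → X} {u v x y : V}
  {Vs Ws : Set V} {l l₁ l₂ : List V}

def IsDWPath (T : ParentTree V) (u : V) (Vs : Set V) (v : V) (Ws : Set V) (l : List V) : Prop :=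
  IsConformingPath T (({u} ∪ T.descU Vs) ∪ ({v} ∪ T.descU Ws)) l ∧ l.head? = some u ∧
    l.getLast? = some v ∧ ∃ l₁ l₂, l = l₁ ++ l₂ ∧ listSet l₁ = {u} ∪ T.descU Vs

lemma DD_eq_sInf_image (T : ParentTree V) (f : V → X) (u : V) (Vs : Set V) (a : V) :
    DD T f u Vs a = sInf (pathWeight f '' {l | IsDDPath T u Vs a l}) := by
  simp only [DD, IsDDPath, IsConformingPath, Set.image, Set.mem_ofPred_eq]
  congr! 3 with w l
  tauto

lemma DW_eq_sInf_image (T : ParentTree V) (f : V → X) (u : V) (Vs : Set V) (v : V)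
    (Ws : Set V) : DW T f u Vs v Ws = sInf (pathWeight f '' {l | IsDWPath T u Vs v Ws l}) := by
  have hset : {u} ∪ T.descU Vs ∪ T.descU Ws ∪ {v} = ({u} ∪ T.descU Vs) ∪ ({v} ∪ T.descU Ws) := by
    ext; simp only [Set.mem_union]; tauto
  simp only [DW, IsDWPath, IsConformingPath, Set.image, Set.mem_ofPred_eq, hset]
  congr! 3 with w l
  tauto

lemma bddBelow_image_pathWeight (s : Set (List V)) : BddBelow (pathWeight f '' s) :=
  ⟨0, Set.forall_mem_image.2 fun l _ => pathWeight_nonneg f l⟩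

lemma DD_le_pathWeight {a : V} (h : IsDDPath T u Vs a l) : DD T f u Vs a ≤ pathWeight f l := by
  rw [DD_eq_sInf_image]
  exact csInf_le (bddBelow_image_pathWeight _) ⟨l, h, rfl⟩

lemma DD_nonneg {a : V} : 0 ≤ DD T f u Vs a := by
  rw [DD_eq_sInf_image]
  exact Real.sInf_nonneg (Set.forall_mem_image.2 fun l _ => pathWeight_nonneg f l)

@[simp]
lemma DD_empty_self : DD T f u ∅ u = 0 :=
  le_antisymm ((DD_le_pathWeight (isDDPath_singleton u)).trans_eq (pathWeight_singleton f u))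
    DD_nonneg

lemma pathWeight_append_reverse (f : V → X) (h₁ : l₁.getLast? = some x)
    (h₂ : l₂.getLast? = some y) :
    pathWeight f (l₁ ++ l₂.reverse) = pathWeight f l₁ + dist (f x) (f y) + pathWeight f l₂ := by
  rw [pathWeight_append f h₁ (by rwa [List.head?_reverse]), pathWeight_reverse]

lemma isDWPath_append_reverse (hVs : Vs ⊆ T.children u) (hv : v ∈ T.children u)
    (hvVs : v ∉ Vs) (hWs : Ws ⊆ T.children v) (h₁ : IsDDPath T u Vs x l₁)
    (h₂ : IsDDPath T v Ws y l₂) : IsDWPath T u Vs v Ws (l₁ ++ l₂.reverse) := by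
  obtain ⟨hc₁, hh₁, -⟩ := h₁
  obtain ⟨hc₂, hh₂, -⟩ := h₂
  have hB := T.singleton_union_descU_subset_desc hWs
  have hd := T.disjoint_singleton_union_descU_desc hVs hv hvVs
  refine ⟨hc₁.append hc₂.reverse (hd.mono_right hB) ?_, by simp [List.head?_append, hh₁],
    by simp [List.getLast?_append, hh₂], l₁, _, rfl, hc₁.2.1⟩
  rintro w ((rfl | hw) | hw) hsub
  · refine Or.inr (Or.inr (Set.union_subset (T.singleton_union_descU_subset_desc hVs) ?_))
    exact hB.trans (T.desc_subset_desc_of_mem (T.mem_desc_of_mem_children hv))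
  · exact Or.inl ((T.desc_subset_descU_of_mem hw).trans Set.subset_union_right)
  · have hwv := T.desc_subset_desc_of_mem (hB hw)
    exact Or.inr (Or.inl fun z hz =>
      (hsub hz).resolve_left fun hzA => Set.disjoint_left.1 hd hzA (hwv hz))

lemma IsDWPath.exists_eq_append_reverse
    (hd : Disjoint ({u} ∪ T.descU Vs) ({v} ∪ T.descU Ws)) (h : IsDWPath T u Vs v Ws l) :
    ∃ x y l₁ l₂, IsDDPath T u Vs x l₁ ∧ IsDDPath T v Ws y l₂ ∧ l = l₁ ++ l₂.reverse := by
  obtain ⟨hc, hh, ht, l₁, l₂, rfl, hl₁⟩ := h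
  obtain ⟨hc₁, hc₂⟩ := hc.of_append
  have hl₂ : listSet l₂ = {v} ∪ T.descU Ws := by
    have hd₁₂ : Disjoint (listSet l₁) (listSet l₂) :=
      Set.disjoint_left.2 fun _ ha hb => List.disjoint_of_nodup_append hc.1 ha hb
    calc listSet l₂ = (listSet l₁ ∪ listSet l₂) \ listSet l₁ := hd₁₂.sup_sdiff_cancel_left.symm
      _ = (({u} ∪ T.descU Vs) ∪ ({v} ∪ T.descU Ws)) \ ({u} ∪ T.descU Vs) := by
        rw [← listSet_append, hc.2.1, hl₁]
      _ = {v} ∪ T.descU Ws := hd.sup_sdiff_cancel_left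
  have hne₁ : l₁ ≠ [] := List.ne_nil_of_mem (hl₁ ▸ Or.inl rfl : u ∈ listSet l₁)
  have hne₂ : l₂ ≠ [] := List.ne_nil_of_mem (hl₂ ▸ Or.inl rfl : v ∈ listSet l₂)
  refine ⟨_, _, l₁, l₂.reverse, ⟨hl₁ ▸ hc₁, ?_, List.getLast?_eq_some_getLast hne₁⟩,
    ⟨hl₂ ▸ hc₂.reverse, ?_, by rw [List.getLast?_reverse, List.head?_eq_some_head hne₂]⟩,
    by rw [List.reverse_reverse]⟩
  · simpa [List.head?_append, List.head?_eq_some_head hne₁] using hh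
  · simpa [List.getLast?_append, List.getLast?_eq_some_getLast hne₂] using ht

theorem DW_eq_sInf_pathEnds [Finite V] (hVs : Vs ⊆ T.children u) (hv : v ∈ T.children u)
    (hvVs : v ∉ Vs) (hWs : Ws ⊆ T.children v) :
    DW T f u Vs v Ws = sInf {r | ∃ x ∈ T.pathEnds u Vs, ∃ y ∈ T.pathEnds v Ws,
      r = DD T f u Vs x + dist (f x) (f y) + DD T f v Ws y} := by
  set R := {r | ∃ x ∈ T.pathEnds u Vs, ∃ y ∈ T.pathEnds v Ws,
    r = DD T f u Vs x + dist (f x) (f y) + DD T f v Ws y}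
  obtain ⟨x₀, hx₀⟩ := T.pathEnds_nonempty u Vs
  obtain ⟨y₀, hy₀⟩ := T.pathEnds_nonempty v Ws
  have hRbdd : BddBelow R := ⟨0, by
    rintro _ ⟨x, -, y, -, rfl⟩
    exact add_nonneg (add_nonneg DD_nonneg dist_nonneg) DD_nonneg⟩
  rw [DW_eq_sInf_image]
  apply le_antisymm
  · refine le_csInf ⟨_, x₀, hx₀, y₀, hy₀, rfl⟩ ?_
    rintro _ ⟨x, hx, y, hy, rfl⟩
    rw [DD_eq_sInf_image, DD_eq_sInf_image]
    refine sInf_le_sInf_add_add _ (bddBelow_image_pathWeight _)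
      (Set.Nonempty.image (pathWeight f) (exists_isDDPath hVs hx)) (bddBelow_image_pathWeight _)
      (Set.Nonempty.image (pathWeight f) (exists_isDDPath hWs hy)) (bddBelow_image_pathWeight _) ?_
    rintro _ ⟨l₁, h₁, rfl⟩ _ ⟨l₂, h₂, rfl⟩
    exact ⟨_, isDWPath_append_reverse hVs hv hvVs hWs h₁ h₂,
      pathWeight_append_reverse f h₁.2.2 h₂.2.2⟩
  · obtain ⟨l₁, h₁⟩ := exists_isDDPath hVs hx₀
    obtain ⟨l₂, h₂⟩ := exists_isDDPath hWs hy₀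
    refine le_csInf ⟨_, _, isDWPath_append_reverse hVs hv hvVs hWs h₁ h₂, rfl⟩ ?_
    rintro _ ⟨l, hl, rfl⟩
    have hd := (T.disjoint_singleton_union_descU_desc hVs hv hvVs).mono_right
      (T.singleton_union_descU_subset_desc hWs)
    obtain ⟨x, y, l₁, l₂, h₁, h₂, rfl⟩ := hl.exists_eq_append_reverse hd
    rw [pathWeight_append_reverse f h₁.2.2 h₂.2.2]
    refine (csInf_le hRbdd ⟨x, h₁.mem_pathEnds hVs, y, h₂.mem_pathEnds hWs, rfl⟩).trans ?_
    gcongr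
    exacts [DD_le_pathWeight h₁, DD_le_pathWeight h₂]

end Values

theorem stmt0_general {V X : Type} [Fintype V] [MetricSpace X]
    (f : V → X)
    (T : ParentTree V) (u v : V) (Vs Ws : Set V)
    (hVs : Vs ⊆ T.children u) (hv : v ∈ T.children u) (hvVs : v ∉ Vs)
    (hWs : Ws ⊆ T.children v) :
    (Vs = ∅ → Ws = ∅ → DW T f u Vs v Ws = dist (f u) (f v)) ∧
    (Vs = ∅ → Ws ≠ ∅ → DW T f u Vs v Ws =
      sInf {r | ∃ y ∈ T.descU Ws, r = dist (f u) (f y) + DD T f v Ws y}) ∧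
    (Vs ≠ ∅ → Ws = ∅ → DW T f u Vs v Ws =
      sInf {r | ∃ x ∈ T.descU Vs, r = DD T f u Vs x + dist (f x) (f v)}) ∧
    (Vs ≠ ∅ → Ws ≠ ∅ → DW T f u Vs v Ws =
      sInf {r | ∃ x ∈ T.descU Vs, ∃ y ∈ T.descU Ws,
        r = DD T f u Vs x + dist (f x) (f y) + DD T f v Ws y}) := by
  have hDW := DW_eq_sInf_pathEnds (f := f) hVs hv hvVs hWs
  refine ⟨fun hV hW => ?_, fun hV hW => ?_, fun hV hW => ?_, fun hV hW => ?_⟩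
  · subst hV hW
    simp [hDW, ParentTree.pathEnds]
  · subst hV
    simp [hDW, ParentTree.pathEnds, hW]
  · subst hW
    simp [hDW, ParentTree.pathEnds, hV]
  · simp [hDW, ParentTree.pathEnds, hV, hW]

/-- The recurrence (eq-v) for the auxiliary quantities `D^u_{V,W}(v)`. -/
theorem stmt0 {V X : Type} [Fintype V] [MetricSpace X]
    (hn : 3 ≤ Fintype.card V) (f : V → X) (hf : Function.Injective f)
    (T : ParentTree V) (u v : V) (Vs Ws : Set V)
    (hVs : Vs ⊆ T.children u) (hv : v ∈ T.children u) (hvVs : v ∉ Vs)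
    (hWs : Ws ⊆ T.children v) :
    (Vs = ∅ → Ws = ∅ → DW T f u Vs v Ws = dist (f u) (f v)) ∧
    (Vs = ∅ → Ws ≠ ∅ → DW T f u Vs v Ws =
      sInf {r | ∃ y ∈ T.descU Ws, r = dist (f u) (f y) + DD T f v Ws y}) ∧
    (Vs ≠ ∅ → Ws = ∅ → DW T f u Vs v Ws =
      sInf {r | ∃ x ∈ T.descU Vs, r = DD T f u Vs x + dist (f x) (f v)}) ∧
    (Vs ≠ ∅ → Ws ≠ ∅ → DW T f u Vs v Ws =
      sInf {r | ∃ x ∈ T.descU Vs, ∃ y ∈ T.descU Ws,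
        r = DD T f u Vs x + dist (f x) (f y) + DD T f v Ws y}) :=
  stmt0_general f T u v Vs Ws hVs hv hvVs hWs
end

section
/- Every Hamiltonian cycle on S that conforms to T has weight at most twice the minimum weight of a Hamiltonian cycle on S. -/
/-- The weight of a Hamiltonian cycle given as a list: the sum of distances
over cyclically consecutive pairs. -/
def cycleWeight {V X : Type} [MetricSpace X] (f : V → X) (h : List V) : ℝ :=
  ((h.zip (h.rotate 1)).map fun p => dist (f p.1) (f p.2)).sum

/-- A Hamiltonian cycle on the point set: a cyclic ordering of all points,
represented as a duplicate-free list containing every point. -/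
def IsHamCycle {V : Type} (h : List V) : Prop := h.Nodup ∧ ∀ x : V, x ∈ h

/-- The set `A` forms a contiguous cyclic arc of the cycle `h`. -/
def IsCyclicArc {V : Type} (A : Set V) (h : List V) : Prop :=
  ∃ i : ℕ, listSet ((h.rotate i).take A.ncard) = A

/-- A Hamiltonian cycle conforms to the rooted tree `T` if for every node `u`
the set `T(u)` of descendants of `u` forms a contiguous cyclic arc of the cycle. -/
def CycleConforms {V : Type} (T : ParentTree V) (h : List V) : Prop :=
  ∀ u : V, IsCyclicArc (T.desc u) h

/-- The total weight of the tree `T`: the sum of distances over its edges. -/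
noncomputable def treeWeight {V X : Type} [Fintype V] [DecidableEq V] [MetricSpace X]
    (T : ParentTree V) (f : V → X) : ℝ :=
  ∑ v ∈ Finset.univ.filter (fun v => v ≠ T.root), dist (f v) (f (T.parent v))

/-- `T` is a minimum spanning tree: among all trees with the same vertex set it
minimizes the sum of distances over its edges. -/
def IsMST {V X : Type} [Fintype V] [DecidableEq V] [MetricSpace X]
    (T : ParentTree V) (f : V → X) : Prop :=
  ∀ T' : ParentTree V, treeWeight T f ≤ treeWeight T' f

/-!
A tree edge `(v, parent v)` lies on the tree path between `a` and `b` exactly when `T(v)` contains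
one of them but not the other, so by the triangle inequality a cycle edge `(a, b)` costs at most
the total weight of these separating tree edges. In a conforming cycle `T(v)` is an arc, which
only two cycle edges cross; summing over the cycle thus charges every tree edge at most twice,
and the cycle weighs at most twice the tree. Conversely, dropping an edge from any Hamiltonian
cycle leaves a Hamiltonian path, which is a spanning tree, so the minimum spanning tree weighs
at most as much as any Hamiltonian cycle.
-/

open Finset

namespace ParentTree

variable {V : Type} (T : ParentTree V)

lemma self_mem_desc (a : V) : a ∈ T.desc a := ⟨0, rfl⟩

lemma mem_desc_root (a : V) : a ∈ T.desc T.root := T.reaches_root a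

lemma mem_desc_iff {a v : V} : a ∈ T.desc v ↔ a = v ∨ T.parent a ∈ T.desc v := by
  constructor
  · rintro ⟨_ | k, hk⟩
    exacts [Or.inl hk, Or.inr ⟨k, hk⟩]
  · rintro (rfl | ⟨k, hk⟩)
    exacts [T.self_mem_desc a, ⟨k + 1, hk⟩]

lemma eq_root_of_iterate_eq_self_s4 {x : V} {k : ℕ} (hk : 0 < k) (hx : T.parent^[k] x = x) :
    x = T.root := by
  obtain ⟨K, hK⟩ := T.reaches_root x
  have hper : T.parent^[k * K] x = x := (Function.IsPeriodicPt.mul_const hx K).eq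
  calc x = T.parent^[k * K - K] (T.parent^[K] x) := by
        rw [← Function.iterate_add_apply, Nat.sub_add_cancel (Nat.le_mul_of_pos_left K hk), hper]
    _ = T.root := by rw [hK, Function.iterate_fixed T.parent_root]

lemma eq_of_mem_desc_of_mem_desc {a b : V} (hab : a ∈ T.desc b) (hba : b ∈ T.desc a) :
    a = b := by
  obtain ⟨i, hi⟩ := hab
  obtain ⟨j, hj⟩ := hba
  have hcyc : T.parent^[j + i] a = a := by rw [Function.iterate_add_apply, hi, hj]
  rcases Nat.eq_zero_or_pos (j + i) with hz | hpos
  · rw [← hi, show i = 0 by omega, Function.iterate_zero_apply]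
  · have ha := T.eq_root_of_iterate_eq_self_s4 hpos hcyc
    rw [← hi, ha, Function.iterate_fixed T.parent_root]

lemma parent_not_mem_desc {a : V} (ha : a ≠ T.root) : T.parent a ∉ T.desc a :=
  fun ⟨k, hk⟩ => ha (T.eq_root_of_iterate_eq_self_s4 k.succ_pos hk)

open Classical in
noncomputable def separating [Fintype V] (a b : V) : Finset V :=
  {v | Xor (a ∈ T.desc v) (b ∈ T.desc v)}

variable [Fintype V]

lemma mem_separating {a b v : V} :
    v ∈ T.separating a b ↔ Xor (a ∈ T.desc v) (b ∈ T.desc v) := by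
  simp [separating]

lemma separating_comm (a b : V) : T.separating a b = T.separating b a := by
  ext v
  simp only [mem_separating, xor_comm]

lemma root_not_mem_separating (a b : V) : T.root ∉ T.separating a b := by
  simp [mem_separating, mem_desc_root]

lemma separating_eq_insert_parent [DecidableEq V] {a b : V} (hb : b ∉ T.desc a) :
    a ∉ T.separating (T.parent a) b ∧
      T.separating a b = insert a (T.separating (T.parent a) b) := by
  have ha : a ≠ T.root := by rintro rfl; exact hb (T.mem_desc_root b)
  refine ⟨by simp [mem_separating, T.parent_not_mem_desc ha, hb], ?_⟩
  ext v
  rcases eq_or_ne v a with rfl | hva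
  · simp [mem_separating, T.self_mem_desc, hb]
  · simp [mem_separating, T.mem_desc_iff (a := a), hva.symm, hva]

theorem dist_le_sum_separating {X : Type} [PseudoMetricSpace X] (f : V → X) (a b : V) :
    dist (f a) (f b) ≤ ∑ v ∈ T.separating a b, dist (f v) (f (T.parent v)) := by
  classical
  induction hn : (T.separating a b).card using Nat.strong_induction_on generalizing a b with
  | _ n ih =>
  have step : ∀ a b, b ∉ T.desc a → (T.separating a b).card = n →
      dist (f a) (f b) ≤ ∑ v ∈ T.separating a b, dist (f v) (f (T.parent v)) := by
    intro a b hb hcard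
    obtain ⟨hnot, heq⟩ := T.separating_eq_insert_parent hb
    have hlt : (T.separating (T.parent a) b).card < n := by
      rw [← hcard, heq, card_insert_of_notMem hnot]; omega
    rw [heq, sum_insert hnot]
    calc dist (f a) (f b) ≤ dist (f a) (f (T.parent a)) + dist (f (T.parent a)) (f b) :=
          dist_triangle _ _ _
      _ ≤ _ := by gcongr; exact ih _ hlt _ _ rfl
  by_cases hb : b ∈ T.desc a
  · by_cases ha : a ∈ T.desc b
    · obtain rfl := T.eq_of_mem_desc_of_mem_desc ha hb
      simpa using sum_nonneg fun v _ => dist_nonneg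
    · rw [dist_comm, separating_comm]
      exact step b a ha (by rwa [separating_comm])
  · exact step a b hb hn

end ParentTree

lemma cycleWeight_eq_sum {V X : Type} [MetricSpace X] (f : V → X) (h : List V)
    [NeZero h.length] :
    cycleWeight f h = ∑ i : Fin h.length, dist (f h[i]) (f h[i + 1]) := by
  rw [cycleWeight, ← Fin.sum_univ_fun_getElem]
  refine Fintype.sum_equiv (finCongr (by simp)) _ _ fun i => ?_
  simp [List.getElem_rotate, Fin.val_add]

lemma IsCyclicArc.exists_shift {V : Type} {A : Set V} {h : List V} [NeZero h.length]
    (hA : IsCyclicArc A h) (hnd : h.Nodup) :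
    ∃ r : Fin h.length, ∀ i : Fin h.length, h[i + r] ∈ A ↔ (i : ℕ) < A.ncard := by
  classical
  obtain ⟨r, hr⟩ := hA
  refine ⟨Fin.ofNat _ r, fun i => ?_⟩
  have hrot : h[i + Fin.ofNat _ r] = (h.rotate r)[(i : ℕ)]'(by simp) := by
    simp [List.getElem_rotate, Fin.val_add]
  rw [hrot, ← Set.ext_iff.mp hr]
  change _ ∈ List.take _ _ ↔ _
  rw [List.mem_take_iff_idxOf_lt (List.getElem_mem _), (List.nodup_rotate.mpr hnd).idxOf_getElem]

lemma card_xor_lt_le_two {n : ℕ} [NeZero n] (c : ℕ) :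
    #{i : Fin n | Xor ((i : ℕ) < c) (((i + 1 : Fin n) : ℕ) < c)} ≤ 2 := by
  have hcross (i : Fin n) (hx : Xor ((i : ℕ) < c) (((i + 1 : Fin n) : ℕ) < c)) :
      (i : ℕ) + 1 = n ∨ (i : ℕ) + 1 = c := by
    by_cases hi : (i : ℕ) + 1 = n
    · exact .inl hi
    · rw [Fin.val_add_one_of_lt' (by omega), xor_def] at hx
      omega
  let L (m : ℕ) : Finset (Fin n) := {i | (i : ℕ) + 1 = m}
  have hle_one (m : ℕ) : #(L m) ≤ 1 :=
    card_le_one.mpr fun a ha b hb => by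
      simp only [L, mem_filter, mem_univ, true_and] at ha hb
      omega
  calc _ ≤ #(L n ∪ L c) :=
        card_le_card fun i hi => by simpa [L] using hcross i (by simpa using hi)
    _ ≤ 1 + 1 := (card_union_le _ _).trans (add_le_add (hle_one n) (hle_one c))

open Classical in
lemma IsCyclicArc.card_crossing_le_two {V : Type} {A : Set V} {h : List V} [NeZero h.length]
    (hA : IsCyclicArc A h) (hnd : h.Nodup) :
    #{i : Fin h.length | Xor (h[i] ∈ A) (h[i + 1] ∈ A)} ≤ 2 := by
  obtain ⟨r, hr⟩ := hA.exists_shift hnd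
  calc #{i : Fin h.length | Xor (h[i] ∈ A) (h[i + 1] ∈ A)}
      = #{i : Fin h.length | Xor ((i : ℕ) < A.ncard) (((i + 1 : Fin _) : ℕ) < A.ncard)} :=
        (card_equiv (Equiv.addRight r) fun i => by simp [← hr, add_right_comm _ r]).symm
    _ ≤ 2 := card_xor_lt_le_two _

theorem cycleWeight_le_two_mul_treeWeight {V X : Type} [Fintype V] [DecidableEq V]
    [MetricSpace X] (f : V → X) (T : ParentTree V) {h : List V} (hnd : h.Nodup)
    (hconf : CycleConforms T h) :
    cycleWeight f h ≤ 2 * treeWeight T f := by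
  classical
  have hT : 0 ≤ treeWeight T f := sum_nonneg fun _ _ => dist_nonneg
  rcases eq_or_ne h [] with rfl | hne
  · simpa [cycleWeight] using hT
  have : NeZero h.length := ⟨by simpa using hne⟩
  set w : V → ℝ := fun v => dist (f v) (f (T.parent v))
  set S : Fin h.length → Finset V := fun i => T.separating h[i] h[i + 1]
  have hcross : ∀ v, v ≠ T.root → #{i | v ∈ S i} ≤ 2 := fun v _ => by
    simpa [S, ParentTree.mem_separating] using (hconf v).card_crossing_le_two hnd
  calc cycleWeight f h = ∑ i : Fin h.length, dist (f h[i]) (f h[i + 1]) := cycleWeight_eq_sum f h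
    _ ≤ ∑ i, ∑ v ∈ S i, w v := sum_le_sum fun i _ => T.dist_le_sum_separating f _ _
    _ = ∑ v, #{i | v ∈ S i} • w v := by
      rw [sum_comm' (t' := univ) (s' := fun v => {i | v ∈ S i}) (by simp)]
      simp only [sum_const]
    _ = ∑ v with v ≠ T.root, #{i | v ∈ S i} • w v := by
      refine (sum_filter_of_ne fun v _ hv => ?_).symm
      rintro rfl
      simp [S, T.root_not_mem_separating] at hv
    _ ≤ ∑ v with v ≠ T.root, 2 * w v := by
      refine sum_le_sum fun v hv => ?_
      rw [nsmul_eq_mul]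
      exact mul_le_mul_of_nonneg_right (by exact_mod_cast hcross v (mem_filter.mp hv).2)
        dist_nonneg
    _ = 2 * treeWeight T f := by rw [treeWeight, mul_sum]

section PathTree

variable {V : Type} {n : ℕ} [NeZero n] (e : Fin n ≃ V)

def pathParent (v : V) : V :=
  e ⟨min (e.symm v + 1) (n - 1), min_lt_of_right_lt (Nat.sub_one_lt (NeZero.ne n))⟩

lemma pathParent_iterate (i : Fin n) (k : ℕ) :
    (pathParent e)^[k] (e i) =
      e ⟨min (i + k) (n - 1), min_lt_of_right_lt (Nat.sub_one_lt (NeZero.ne n))⟩ := by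
  induction k with
  | zero => simp [Nat.le_sub_one_of_lt i.isLt]
  | succ k ih =>
    rw [Function.iterate_succ_apply', ih, pathParent]
    congr 2
    simp only [Equiv.symm_apply_apply]
    omega

/-- The path `e 0, e 1, …, e (n - 1)`, rooted at its last vertex. -/
def pathTree : ParentTree V where
  root := e ⟨n - 1, Nat.sub_one_lt (NeZero.ne n)⟩
  parent := pathParent e
  parent_root := by simp [pathParent]
  reaches_root v := ⟨n - 1, by simpa using pathParent_iterate e (e.symm v) (n - 1)⟩

lemma treeWeight_pathTree_le [Fintype V] [DecidableEq V] {X : Type} [MetricSpace X]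
    (f : V → X) : treeWeight (pathTree e) f ≤ ∑ i, dist (f (e i)) (f (e (i + 1))) := by
  rw [treeWeight, sum_filter, ← e.sum_comp]
  refine sum_le_sum fun i _ => ?_
  split_ifs with hi
  · have hlt : (i : ℕ) + 1 < n := by
      have : (i : ℕ) ≠ n - 1 := fun h => hi (congrArg e (Fin.ext h))
      omega
    refine le_of_eq (congrArg (fun j => dist (f (e i)) (f (e j))) (Fin.ext ?_))
    simp only [Equiv.symm_apply_apply, Fin.val_add_one_of_lt' hlt]
    omega
  · exact dist_nonneg

end PathTree

theorem IsMST.treeWeight_le_cycleWeight {V X : Type} [Fintype V] [DecidableEq V]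
    [MetricSpace X] {f : V → X} {T : ParentTree V} (hmst : IsMST T f) {h : List V}
    (hh : IsHamCycle h) : treeWeight T f ≤ cycleWeight f h := by
  have : NeZero h.length := ⟨(List.length_pos_of_mem (hh.2 T.root)).ne'⟩
  let e := hh.1.getEquivOfForallMemList h hh.2
  calc treeWeight T f ≤ treeWeight (pathTree e) f := hmst _
    _ ≤ ∑ i, dist (f (e i)) (f (e (i + 1))) := treeWeight_pathTree_le e f
    _ = cycleWeight f h := (cycleWeight_eq_sum f h).symm

theorem stmt4_general {V X : Type} [Fintype V] [DecidableEq V] [MetricSpace X]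
    (f : V → X)
    (T : ParentTree V) (hmst : IsMST T f)
    (h : List V) (hh : IsHamCycle h) (hconf : CycleConforms T h) :
    ∀ h' : List V, IsHamCycle h' → cycleWeight f h ≤ 2 * cycleWeight f h' := fun _ hh' =>
  (cycleWeight_le_two_mul_treeWeight f T hh.1 hconf).trans
    (by gcongr; exact hmst.treeWeight_le_cycleWeight hh')

/-- Every Hamiltonian cycle conforming to a minimum spanning tree has weight at
most twice the minimum weight of a Hamiltonian cycle. -/
theorem stmt4 {V X : Type} [Fintype V] [DecidableEq V] [MetricSpace X]
    (hn : 3 ≤ Fintype.card V) (f : V → X) (hf : Function.Injective f)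
    (T : ParentTree V) (hmst : IsMST T f)
    (h : List V) (hh : IsHamCycle h) (hconf : CycleConforms T h) :
    ∀ h' : List V, IsHamCycle h' → cycleWeight f h ≤ 2 * cycleWeight f h' :=
  stmt4_general f T hmst h hh hconf
end

section
/- The number of quadruples (u, v, x, y) of vertices of T such that v is a child of u, y is a descendant of v with y ≠ v, and x is a descendant of u with x ≠ u that is not a descendant of v, is at most n². -/
/-- The number of quadruples `(u, v, x, y)` with `v` a child of `u`, `y` a
descendant of `v` with `y ≠ v`, and `x` a descendant of `u` with `x ≠ u` that
is not a descendant of `v`, is at most `n²`. -/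
theorem stmt6 {V : Type} [Fintype V] (T : ParentTree V) :
    {q : V × V × V × V | q.2.1 ∈ T.children q.1 ∧
      q.2.2.2 ∈ T.desc q.2.1 ∧ q.2.2.2 ≠ q.2.1 ∧
      q.2.2.1 ∈ T.desc q.1 ∧ q.2.2.1 ≠ q.1 ∧ q.2.2.1 ∉ T.desc q.2.1}.ncard ≤
    Fintype.card V ^ 2 := by
  classical
  set S : Set (V × V × V × V) := {q : V × V × V × V | q.2.1 ∈ T.children q.1 ∧
      q.2.2.2 ∈ T.desc q.2.1 ∧ q.2.2.2 ≠ q.2.1 ∧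
      q.2.2.1 ∈ T.desc q.1 ∧ q.2.2.1 ≠ q.1 ∧ q.2.2.1 ∉ T.desc q.2.1} with hS
  -- transitivity of desc
  have htrans : ∀ a b c : V, a ∈ T.desc b → b ∈ T.desc c → a ∈ T.desc c := by
    rintro a b c ⟨k, hk⟩ ⟨m, hm⟩
    exact ⟨m + k, by rw [Function.iterate_add_apply, hk, hm]⟩
  -- strict descendant: parent is still a descendant
  have hstep : ∀ a b : V, a ∈ T.desc b → a ≠ b → T.parent a ∈ T.desc b := by
    rintro a b ⟨k, hk⟩ hne
    cases k with
    | zero => exact absurd hk hne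
    | succ k => exact ⟨k, by rwa [Function.iterate_succ_apply] at hk⟩
  -- ancestors of a vertex form a chain
  have hchain : ∀ y v v' : V, y ∈ T.desc v → y ∈ T.desc v' →
      v ∈ T.desc v' ∨ v' ∈ T.desc v := by
    rintro y v v' ⟨k, hk⟩ ⟨m, hm⟩
    rcases le_total k m with h | h
    · left
      refine ⟨m - k, ?_⟩
      rw [← hk, ← Function.iterate_add_apply, Nat.sub_add_cancel h, hm]
    · right
      refine ⟨k - m, ?_⟩
      rw [← hm, ← Function.iterate_add_apply, Nat.sub_add_cancel h, hk]
  have hinj : Set.InjOn (fun q : V × V × V × V => (q.2.2.1, q.2.2.2)) S := by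
    rintro ⟨u, v, x, y⟩ hq ⟨u', v', x', y'⟩ hq' heq
    simp only [Prod.mk.injEq] at heq
    obtain ⟨hx, hy⟩ := heq
    subst hx; subst hy
    obtain ⟨⟨hpu, hvu⟩, hyv, hyne, hxu, hxne, hxv⟩ := hq
    obtain ⟨⟨hpu', hvu'⟩, hyv', hyne', hxu', hxne', hxv'⟩ := hq'
    dsimp only at hpu hvu hyv hyne hxu hxne hxv hpu' hvu' hyv' hyne' hxu' hxne' hxv'
    have hvv' : v = v' := by
      by_contra hne
      rcases hchain y v v' hyv hyv' with h | h
      · exact hxv' (htrans x (T.parent v) v' (hpu ▸ hxu) (hstep v v' h hne))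
      · exact hxv (htrans x (T.parent v') v (hpu' ▸ hxu') (hstep v' v h (Ne.symm hne)))
    have huu' : u = u' := by rw [← hpu, ← hpu', hvv']
    simp [hvv', huu']
  calc S.ncard = ((fun q : V × V × V × V => (q.2.2.1, q.2.2.2)) '' S).ncard :=
        (Set.ncard_image_of_injOn hinj).symm
    _ ≤ (Set.univ : Set (V × V)).ncard :=
        Set.ncard_le_ncard (Set.subset_univ _) Set.finite_univ
    _ = Fintype.card V ^ 2 := by
        rw [Set.ncard_univ, Nat.card_eq_fintype_card, Fintype.card_prod, sq]
end

section
/- Every Hamiltonian cycle on S that conforms to T also conforms to T₁; that is, Λ(T) ⊆ Λ(T₁). -/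
/-- After a degree-increasing operation at `v ∈ C(u)` (every child of `v`
becomes a child of `u`, so `v` becomes a leaf), every Hamiltonian cycle
conforming to `T` also conforms to the new tree `T₁`: `Λ(T) ⊆ Λ(T₁)`. -/
theorem stmt8 {V X : Type} [Fintype V] [MetricSpace X]
    (hn : 3 ≤ Fintype.card V) (f : V → X) (hf : Function.Injective f)
    (T T₁ : ParentTree V) (u v : V) (hv : v ∈ T.children u)
    (hroot : T₁.root = T.root)
    (hpar : ∀ w : V, (T.parent w = v → T₁.parent w = u) ∧
      (T.parent w ≠ v → T₁.parent w = T.parent w)) :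
    ∀ h : List V, IsHamCycle h → CycleConforms T h → CycleConforms T₁ h := by
  classical
  intro h hh hc
  obtain ⟨hpv, hvu⟩ := hv
  -- T₁.parent never equals v
  have hnv : ∀ y, T₁.parent y ≠ v := by
    intro y
    by_cases hy : T.parent y = v
    · rw [(hpar y).1 hy]; exact fun hyy => hvu hyy.symm
    · rw [(hpar y).2 hy]; exact hy
  have hdescv : T₁.desc v = {v} := by
    ext x
    simp only [ParentTree.desc, Set.mem_setOf_eq, Set.mem_singleton_iff]
    constructor
    · rintro ⟨k, hk⟩
      cases k with
      | zero => exact hk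
      | succ n =>
        exfalso
        rw [Function.iterate_succ_apply'] at hk
        exact hnv _ hk
    · rintro rfl; exact ⟨0, rfl⟩
  have fwd : ∀ k x w, w ≠ v → T.parent^[k] x = w → ∃ m, T₁.parent^[m] x = w := by
    intro k
    induction k using Nat.strong_induction_on with
    | _ k ih =>
      intro x w hw hk
      cases k with
      | zero => exact ⟨0, hk⟩
      | succ n =>
        rw [Function.iterate_succ_apply] at hk
        by_cases hx : T.parent x = v
        · rw [hx] at hk
          cases n with
          | zero => exact absurd hk.symm hw
          | succ m =>
            rw [Function.iterate_succ_apply, hpv] at hk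
            obtain ⟨m', hm'⟩ := ih m (by omega) u w hw hk
            refine ⟨m' + 1, ?_⟩
            rw [Function.iterate_succ_apply, (hpar x).1 hx]
            exact hm'
        · obtain ⟨m', hm'⟩ := ih n (by omega) (T.parent x) w hw hk
          exact ⟨m' + 1, by rw [Function.iterate_succ_apply, (hpar x).2 hx]; exact hm'⟩
  have bwd : ∀ k x w, T₁.parent^[k] x = w → ∃ m, T.parent^[m] x = w := by
    intro k
    induction k with
    | zero => intro x w hk; exact ⟨0, hk⟩
    | succ n ih =>
      intro x w hk
      rw [Function.iterate_succ_apply] at hk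
      by_cases hx : T.parent x = v
      · rw [(hpar x).1 hx] at hk
        obtain ⟨m, hm⟩ := ih u w hk
        refine ⟨m + 2, ?_⟩
        rw [Function.iterate_succ_apply, hx, Function.iterate_succ_apply, hpv]
        exact hm
      · rw [(hpar x).2 hx] at hk
        obtain ⟨m, hm⟩ := ih (T.parent x) w hk
        exact ⟨m + 1, by rw [Function.iterate_succ_apply]; exact hm⟩
  -- singleton arcs
  have harc1 : ∀ x : V, IsCyclicArc {x} h := by
    intro x
    have hx : x ∈ h := hh.2 x
    have hlen : h.idxOf x < h.length := List.idxOf_lt_length_iff.2 hx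
    refine ⟨h.idxOf x, ?_⟩
    rw [Set.ncard_singleton]
    have hlen' : 0 < (h.rotate (h.idxOf x)).length := by
      rw [List.length_rotate]; omega
    have hget : (h.rotate (h.idxOf x))[0] = x := by
      rw [List.getElem_rotate]
      simp [Nat.mod_eq_of_lt hlen]
    have h0 : (h.rotate (h.idxOf x))[0]? = some x := by
      rw [List.getElem?_eq_getElem hlen', hget]
    cases hr : h.rotate (h.idxOf x) with
    | nil => rw [hr] at h0; simp at h0
    | cons a t =>
      rw [hr] at h0
      simp only [List.getElem?_cons_zero, Option.some.injEq] at h0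
      rw [h0]
      ext y
      simp [listSet]
  intro w
  by_cases hw : w = v
  · rw [hw, hdescv]
    exact harc1 v
  · have hEq : T₁.desc w = T.desc w := by
      ext x
      exact ⟨fun ⟨k, hk⟩ => bwd k x w hk, fun ⟨k, hk⟩ => fwd k x w hw hk⟩
    rw [hEq]
    exact hc w
end
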